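/- Fix α(0) ∈ (0,1) and let α be the symmetric a priori measure on {-1,0,1} with α(1) = α(−1) = (1−α(0))/2, and let β_c = 2 + e·α(0)/α(1). For β > β_c, let m(β) ∈ (0,1] denote the magnetization coordinate m of the global maximizer of Φ_{β,α} with ν(1) > ν(−1), where ν is parametrized by (x,m) via (ν(−1), ν(0), ν(1)) = ( (x/2)(1−m), 1−x, (x/2)(1+m) ). Then there exists a constant c > 0 such that lim_{β↓β_c} m(β)/(β−β_c)^{1/2} = c; in particular the mean-field soft-core Widom-Rowlinson model has the mean-field critical exponent 1/2 for the magnetization in the inverse temperature direction. -/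

import Mathlib

/-!
A maximizer `ν` with `ν(1) > 0` lies in the interior of the simplex: moving mass `t` onto an
empty site gains `-t log t`, which beats any linear cost. In the interior, with
`w = artanh m / m` and `κ = α(0) / α(1)`, the stationarity equations give `β x = 2 w` and
`β ν(0) = κ H(m)`, where `H(m) = w e^w √(1 - m²)`; hence `β = 2 w + κ H(m)`. Since
`w ≥ 1 + m² / 3` and `H ≥ e` (`log H` increases because
`artanh m ≤ sinh (artanh m) = m / √(1 - m²)`), `β ≥ β_c + 2 m² / 3`, so `m → 0` as `β ↓ β_c`, and the expansion
`β = β_c + (2/3 + κ e / 6) m² + o(m²)` inverts to `m ~ ((β - β_c) / (2/3 + κ e / 6))^{1/2}`.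
-/

open Real Filter Finset Topology

/-- The local state space `{-1, 0, 1}` of the Widom-Rowlinson model. -/
abbrev Spin : Finset ℤ := {-1, 0, 1}

/-- A probability vector on `{-1, 0, 1}`, encoded as a function `ℤ → ℝ`
supported on `{-1, 0, 1}`. -/
def IsProbVec (ν : ℤ → ℝ) : Prop :=
  (∀ s, 0 ≤ ν s) ∧ (∀ s, s ∉ Spin → ν s = 0) ∧ ∑ s ∈ Spin, ν s = 1

/-- Relative entropy `I(ν | α)` on `{-1,0,1}` (with the convention `0 log 0 = 0`,
which holds automatically since `Real.log 0 = 0`). -/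
noncomputable def relEnt (ν α : ℤ → ℝ) : ℝ :=
  ∑ s ∈ Spin, ν s * Real.log (ν s / α s)

/-- The variational functional `Φ_{β,α}(ν) = -β ν(1) ν(-1) - I(ν|α)` of the mean-field
soft-core Widom-Rowlinson model. -/
noncomputable def Phi (β : ℝ) (α ν : ℤ → ℝ) : ℝ :=
  -β * ν 1 * ν (-1) - relEnt ν α

/-- `ν` is a global maximizer of `Φ_{β,α}` on the simplex of probability vectors. -/
def IsMaximizer (β : ℝ) (α ν : ℤ → ℝ) : Prop :=
  IsProbVec ν ∧ ∀ ν' : ℤ → ℝ, IsProbVec ν' → Phi β α ν' ≤ Phi β α ν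

/-- The probability vector on `{-1,0,1}` with occupation density `x` and
magnetization `m`: `(ν(-1), ν(0), ν(1)) = ((x/2)(1-m), 1-x, (x/2)(1+m))`. -/
noncomputable def coordMeasure (x m : ℝ) : ℤ → ℝ := fun s =>
  if s = -1 then x / 2 * (1 - m)
  else if s = 0 then 1 - x
  else if s = 1 then x / 2 * (1 + m)
  else 0

/-- The symmetric a priori measure with hole weight `a0` and
`α(1) = α(-1) = (1 - a0)/2`. -/
noncomputable def symAlpha (a0 : ℝ) : ℤ → ℝ := fun s =>
  if s = 0 then a0
  else if s = 1 then (1 - a0) / 2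
  else if s = -1 then (1 - a0) / 2
  else 0

lemma sum_spin (f : ℤ → ℝ) : ∑ s ∈ Spin, f s = f (-1) + f 0 + f 1 := by
  rw [Finset.sum_insert (by decide), Finset.sum_insert (by decide), Finset.sum_singleton,
    add_assoc]

noncomputable def spinVec (p q r : ℝ) : ℤ → ℝ := fun s =>
  if s = -1 then p else if s = 0 then q else if s = 1 then r else 0

@[simp] lemma spinVec_neg_one (p q r : ℝ) : spinVec p q r (-1) = p := by simp [spinVec]
@[simp] lemma spinVec_zero (p q r : ℝ) : spinVec p q r 0 = q := by simp [spinVec]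
@[simp] lemma spinVec_one (p q r : ℝ) : spinVec p q r 1 = r := by simp [spinVec]

lemma isProbVec_spinVec {p q r : ℝ} (hp : 0 ≤ p) (hq : 0 ≤ q) (hr : 0 ≤ r)
    (hsum : p + q + r = 1) : IsProbVec (spinVec p q r) := by
  refine ⟨fun s => ?_, fun s hs => ?_, by simpa [sum_spin, add_assoc] using hsum⟩
  · unfold spinVec; split_ifs <;> first | assumption | rfl
  · simp only [Spin, Finset.mem_insert, Finset.mem_singleton, not_or] at hs
    simp [spinVec, hs.1, hs.2.1, hs.2.2]

lemma IsProbVec.add_add_eq_one {p q r : ℝ} (h : IsProbVec (spinVec p q r)) : p + q + r = 1 := by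
  simpa [sum_spin, add_assoc] using h.2.2

lemma Phi_spinVec (β : ℝ) (α : ℤ → ℝ) (p q r : ℝ) :
    Phi β α (spinVec p q r) = -β * r * p -
      (p * log (p / α (-1)) + q * log (q / α 0) + r * log (r / α 1)) := by
  simp [Phi, relEnt, add_assoc]

lemma hasDerivAt_mul_log_div {y A : ℝ} (hy : y ≠ 0) (hA : A ≠ 0) :
    HasDerivAt (fun s => s * log (s / A)) (log (y / A) + 1) y := by
  have hsplit : (fun s => s * log (s / A)) = fun s => s * log s - s * log A := by
    funext s
    rcases eq_or_ne s 0 with rfl | hs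
    · simp
    · rw [log_div hs hA]; ring
  rw [hsplit, log_div hy hA]
  exact ((hasDerivAt_mul_log hy).fun_sub ((hasDerivAt_id' y).mul_const (log A))).congr_deriv
    (by ring)

lemma hasDerivAt_const_add_mul (y d : ℝ) : HasDerivAt (fun t : ℝ => y + t * d) d 0 := by
  simpa using ((hasDerivAt_id (0 : ℝ)).mul_const d).const_add y

lemma hasDerivAt_mul_log_div_line {y A : ℝ} (d : ℝ) (hy : y ≠ 0) (hA : A ≠ 0) :
    HasDerivAt (fun t => (y + t * d) * log ((y + t * d) / A)) ((log (y / A) + 1) * d) 0 := by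
  have hent : HasDerivAt (fun s => s * log (s / A)) (log (y / A) + 1) (y + 0 * d) := by
    simpa using hasDerivAt_mul_log_div hy hA
  exact hent.comp (0 : ℝ) (hasDerivAt_const_add_mul y d)

lemma exists_lt_sub_mul_log_div {u : ℝ → ℝ} {A ε : ℝ} (hu : DifferentiableAt ℝ u 0)
    (hA : A ≠ 0) (hε : 0 < ε) : ∃ t ∈ Set.Ioo 0 ε, u 0 < u t - t * log (t / A) := by
  have hslope : Tendsto (fun t => (u t - u 0) / t) (𝓝[>] 0) (𝓝 (deriv u 0)) := by
    have := hasDerivAt_iff_tendsto_slope.mp hu.hasDerivAt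
    refine (this.mono_left (nhdsGT_le_nhdsNE 0)).congr fun t => ?_
    simp [slope_def_field]
  have hlog : Tendsto (fun t => -log (t / A)) (𝓝[>] 0) atTop := by
    refine (tendsto_neg_atBot_atTop.comp tendsto_log_nhdsGT_zero).atTop_add
      (tendsto_const_nhds (x := log A)) |>.congr' ?_
    filter_upwards [self_mem_nhdsWithin] with t (ht : 0 < t)
    simp only [Function.comp_apply, log_div ht.ne' hA]
    ring
  obtain ⟨t, ⟨hgrow, htε⟩, ht⟩ := (((hslope.add_atTop hlog).eventually_gt_atTop 0).and
    (Ioo_mem_nhdsGT hε)).and self_mem_nhdsWithin |>.exists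
  refine ⟨t, ⟨ht, htε.2⟩, ?_⟩
  have ht' : (0 : ℝ) < t := ht
  have := mul_pos ht' hgrow
  rw [mul_add, mul_div_cancel₀ _ ht'.ne'] at this
  linarith

section Maximizer

variable {β : ℝ} {α : ℤ → ℝ} {p q r : ℝ}

lemma hasDerivAt_Phi_spinVec_line (hα : ∀ s ∈ Spin, α s ≠ 0) (hp : p ≠ 0) (hq : q ≠ 0)
    (hr : r ≠ 0) (dp dq dr : ℝ) :
    HasDerivAt (fun t => Phi β α (spinVec (p + t * dp) (q + t * dq) (r + t * dr)))
      (-β * (dr * p + r * dp) - ((log (p / α (-1)) + 1) * dp + (log (q / α 0) + 1) * dq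
        + (log (r / α 1) + 1) * dr)) 0 := by
  simp only [Phi_spinVec]
  have hquad : HasDerivAt (fun t => -β * (r + t * dr) * (p + t * dp))
      (-β * (dr * p + r * dp)) 0 := by
    exact (((hasDerivAt_const_add_mul r dr).const_mul (-β)).fun_mul
      (hasDerivAt_const_add_mul p dp)).congr_deriv (by ring)
  exact hquad.fun_sub ((((hasDerivAt_mul_log_div_line dp hp (hα _ (by decide))).fun_add
    (hasDerivAt_mul_log_div_line dq hq (hα _ (by decide)))).fun_add
    (hasDerivAt_mul_log_div_line dr hr (hα _ (by decide)))))

theorem IsMaximizer.pos_of_pos_one (hmax : IsMaximizer β α (spinVec p q r))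
    (hα : ∀ s ∈ Spin, α s ≠ 0) (hr : 0 < r) : 0 < p ∧ 0 < q := by
  obtain ⟨hprob, hopt⟩ := hmax
  have hp0 : 0 ≤ p := by simpa using hprob.1 (-1)
  have hq0 : 0 ≤ q := by simpa using hprob.1 0
  have hsum := hprob.add_add_eq_one
  have hent : DifferentiableAt ℝ (fun t => (r - t) * log ((r - t) / α 1)) 0 := by
    simpa [← sub_eq_add_neg] using
      (hasDerivAt_mul_log_div_line (-1) hr.ne' (hα 1 (by decide))).differentiableAt
  constructor
  · refine hp0.lt_of_ne fun hp => ?_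
    subst hp
    obtain ⟨t, ⟨ht, htr⟩, hlt⟩ := exists_lt_sub_mul_log_div
      (u := fun t => -β * (r - t) * t - (q * log (q / α 0) + (r - t) * log ((r - t) / α 1)))
      (by fun_prop) (hα (-1) (by decide)) hr
    have := hopt _ (isProbVec_spinVec ht.le hq0 (by linarith) (by linarith) :
      IsProbVec (spinVec t q (r - t)))
    simp only [Phi_spinVec] at this
    simp only [sub_zero, mul_zero] at hlt
    linarith
  · refine hq0.lt_of_ne fun hq => ?_
    subst hq
    obtain ⟨t, ⟨ht, htr⟩, hlt⟩ := exists_lt_sub_mul_log_div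
      (u := fun t => -β * (r - t) * p - (p * log (p / α (-1)) + (r - t) * log ((r - t) / α 1)))
      (by fun_prop) (hα 0 (by decide)) hr
    have := hopt _ (isProbVec_spinVec hp0 ht.le (by linarith) (by linarith) :
      IsProbVec (spinVec p t (r - t)))
    simp only [Phi_spinVec] at this
    simp only [sub_zero] at hlt
    linarith

theorem IsMaximizer.log_div_add_mul_eq (hmax : IsMaximizer β α (spinVec p q r))
    (hα : ∀ s ∈ Spin, α s ≠ 0) (hp : 0 < p) (hq : 0 < q) (hr : 0 < r) :
    log (r / α 1) + β * p = log (q / α 0) ∧ log (p / α (-1)) + β * r = log (q / α 0) := by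
  have hcrit : ∀ dp dq dr : ℝ, dp + dq + dr = 0 →
      -β * (dr * p + r * dp) - ((log (p / α (-1)) + 1) * dp + (log (q / α 0) + 1) * dq
        + (log (r / α 1) + 1) * dr) = 0 := by
    intro dp dq dr hd
    refine IsLocalMax.hasDerivAt_eq_zero ?_
      (hasDerivAt_Phi_spinVec_line hα hp.ne' hq.ne' hr.ne' dp dq dr)
    have hnear : ∀ y d : ℝ, 0 < y → ∀ᶠ t in 𝓝 (0 : ℝ), 0 < y + t * d := fun y d hy =>
      (hasDerivAt_const_add_mul y d).continuousAt.eventually_const_lt (by simpa using hy)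
    filter_upwards [hnear p dp hp, hnear q dq hq, hnear r dr hr] with t htp htq htr
    simpa using hmax.2 _ (isProbVec_spinVec htp.le htq.le htr.le
      (by linear_combination t * hd + hmax.1.add_add_eq_one))
  constructor
  · linear_combination -hcrit 0 (-1) 1 (by norm_num)
  · linear_combination -hcrit 1 (-1) 0 (by norm_num)

end Maximizer

lemma hasDerivAt_artanh {m : ℝ} (hm : m ∈ Set.Ioo (-1) 1) :
    HasDerivAt artanh (1 - m ^ 2)⁻¹ m := by
  have hlog : artanh =ᶠ[𝓝 m] fun x => (log (1 + x) - log (1 - x)) / 2 := by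
    filter_upwards [isOpen_Ioo.mem_nhds hm] with x hx
    rw [artanh_eq_half_log (Set.Ioo_subset_Icc_self hx), log_div (by grind) (by grind)]
    ring
  have h1 : (1 : ℝ) + m ≠ 0 := by grind
  have h2 : (1 : ℝ) - m ≠ 0 := by grind
  have h3 : (1 : ℝ) - m ^ 2 ≠ 0 := (by nlinarith [hm.1, hm.2] : (0 : ℝ) < 1 - m ^ 2).ne'
  refine HasDerivAt.congr_of_eventuallyEq ?_ hlog
  refine (((((hasDerivAt_id' m).const_add 1).log h1).fun_sub
    (((hasDerivAt_id' m).const_sub 1).log h2)).div_const 2).congr_deriv ?_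
  field_simp
  ring

lemma self_add_pow_three_div_three_le_artanh {m : ℝ} (hm : m ∈ Set.Ico 0 1) :
    m + m ^ 3 / 3 ≤ artanh m := by
  have hser := hasSum_log_sub_log_of_abs_lt_one (x := m) (by grind [abs_of_nonneg])
  have := sum_le_hasSum (Finset.range 2) (fun k _ => by have := hm.1; positivity) hser
  rw [artanh_eq_half_log (by grind), log_div (by grind) (by grind)]
  norm_num [Finset.sum_range_succ] at this ⊢
  linarith

lemma artanh_mul_sqrt_one_sub_sq_le {m : ℝ} (hm : m ∈ Set.Ico 0 1) :
    artanh m * √(1 - m ^ 2) ≤ m := by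
  have hm' : m ∈ Set.Ioo (-1) 1 := ⟨by linarith [hm.1], hm.2⟩
  have hs : 0 < √(1 - m ^ 2) := sqrt_pos.2 (by nlinarith [hm.1, hm.2])
  rw [← le_div_iff₀ hs, ← sinh_artanh hm']
  exact self_le_sinh_iff.2 (artanh_nonneg hm.1)

lemma tendsto_artanh_div_self_sub_one_div_sq :
    Tendsto (fun m => (artanh m / m - 1) / m ^ 2) (𝓝[>] 0) (𝓝 (1 / 3)) := by
  have hIoo : Set.Ioo (0 : ℝ) 1 ∈ 𝓝[>] 0 := Ioo_mem_nhdsGT one_pos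
  have hcube : Tendsto (fun m => (artanh m - m) / m ^ 3) (𝓝[>] 0) (𝓝 (1 / 3)) := by
    refine HasDerivAt.lhopital_zero_nhdsGT (f' := fun m => (1 - m ^ 2)⁻¹ - 1)
      (g' := fun m => 3 * m ^ 2) ?_ ?_ ?_ ?_ ?_ ?_
    · filter_upwards [hIoo] with m hm
      exact (hasDerivAt_artanh ⟨by linarith [hm.1], hm.2⟩).sub (hasDerivAt_id m)
    · filter_upwards with m
      simpa using hasDerivAt_pow 3 m
    · filter_upwards [self_mem_nhdsWithin] with m (hm : 0 < m)
      positivity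
    · have := (((hasDerivAt_artanh (m := 0) (by norm_num)).fun_sub
        (hasDerivAt_id' 0)).continuousAt.tendsto.mono_left (nhdsWithin_le_nhds (s := Set.Ioi 0)))
      simpa using this
    · exact ((continuous_pow 3).tendsto' 0 0 (by simp)).mono_left nhdsWithin_le_nhds
    · have hlim : Tendsto (fun m : ℝ => (3 * (1 - m ^ 2))⁻¹) (𝓝[>] 0) (𝓝 (1 / 3)) :=
        ((by fun_prop : Continuous fun m : ℝ => 3 * (1 - m ^ 2)).tendsto' 0 3 (by simp)).inv₀
          (by norm_num) |>.mono_left nhdsWithin_le_nhds |>.trans (by norm_num)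
      refine hlim.congr' ?_
      filter_upwards [hIoo] with m hm
      have : 1 - m ^ 2 ≠ 0 := by nlinarith [hm.1, hm.2]
      have := hm.1.ne'
      field_simp
      ring
  refine hcube.congr' ?_
  filter_upwards [self_mem_nhdsWithin] with m (hm : 0 < m)
  field_simp

lemma tendsto_artanh_div_self : Tendsto (fun m => artanh m / m) (𝓝[>] 0) (𝓝[>] 1) := by
  refine tendsto_nhdsWithin_iff.2 ⟨?_, ?_⟩
  · have hsq : Tendsto (fun m : ℝ => m ^ 2) (𝓝[>] 0) (𝓝 0) :=
      ((continuous_pow 2).tendsto' 0 0 (by simp)).mono_left nhdsWithin_le_nhds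
    have := (tendsto_artanh_div_self_sub_one_div_sq.mul hsq).add_const 1
    rw [mul_zero, zero_add] at this
    refine this.congr' ?_
    filter_upwards [self_mem_nhdsWithin] with m (hm : 0 < m)
    field_simp
    ring
  · filter_upwards [Ioo_mem_nhdsGT one_pos] with m hm
    rw [Set.mem_Ioi, one_lt_div hm.1]
    nlinarith [self_add_pow_three_div_three_le_artanh ⟨hm.1.le, hm.2⟩, pow_pos hm.1 3]

lemma HasDerivAt.tendsto_comp_sub_div {f u v : ℝ → ℝ} {f' a c : ℝ} {l : Filter ℝ}
    (hf : HasDerivAt f f' a) (hu : Tendsto u l (𝓝[≠] a))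
    (huv : Tendsto (fun t => (u t - a) / v t) l (𝓝 c)) :
    Tendsto (fun t => (f (u t) - f a) / v t) l (𝓝 (f' * c)) := by
  refine (((hasDerivAt_iff_tendsto_slope.mp hf).comp hu).mul huv).congr' ?_
  filter_upwards [hu self_mem_nhdsWithin] with t (ht : u t ≠ a)
  simp [slope_def_field, div_mul_div_cancel₀ (sub_ne_zero.2 ht)]

lemma tendsto_sqrt_one_sub_sq_sub_one_div_sq :
    Tendsto (fun m => (√(1 - m ^ 2) - 1) / m ^ 2) (𝓝[>] 0) (𝓝 (-1 / 2)) := by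
  have hlim : Tendsto (fun m : ℝ => -1 / (√(1 - m ^ 2) + 1)) (𝓝[>] 0) (𝓝 (-1 / 2)) := by
    refine ((Continuous.div continuous_const (by fun_prop) fun m => by positivity).tendsto' 0 _
      (by norm_num)).mono_left nhdsWithin_le_nhds
  refine hlim.congr' ?_
  filter_upwards [Ioo_mem_nhdsGT one_pos] with m hm
  have hs := sq_sqrt (by nlinarith [hm.1, hm.2] : (0 : ℝ) ≤ 1 - m ^ 2)
  have : √(1 - m ^ 2) + 1 ≠ 0 := by positivity
  have := hm.1.ne'
  field_simp
  linear_combination -hs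

section HoleFactor

noncomputable def holeFactor (m : ℝ) : ℝ := artanh m / m * exp (artanh m / m) * √(1 - m ^ 2)

noncomputable def logHoleFactor (m : ℝ) : ℝ :=
  log (artanh m / m) + artanh m / m + log (1 - m ^ 2) / 2

variable {m : ℝ}

lemma artanh_div_self_pos (hm : m ∈ Set.Ioo 0 1) : 0 < artanh m / m :=
  div_pos (artanh_pos hm) hm.1

lemma exp_logHoleFactor (hm : m ∈ Set.Ioo 0 1) : exp (logHoleFactor m) = holeFactor m := by
  have hsq : 0 < 1 - m ^ 2 := by nlinarith [hm.1, hm.2]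
  rw [logHoleFactor, holeFactor, exp_add, exp_add, exp_log (artanh_div_self_pos hm),
    sqrt_eq_rpow, rpow_def_of_pos hsq, div_eq_mul_one_div (log _)]

lemma hasDerivAt_logHoleFactor (hm : m ∈ Set.Ioo 0 1) :
    HasDerivAt logHoleFactor ((1 - m ^ 2)⁻¹ / artanh m - artanh m / m ^ 2) m := by
  have hw := (hasDerivAt_artanh ⟨by linarith [hm.1], hm.2⟩).fun_div (hasDerivAt_id' m) hm.1.ne'
  have hsq : HasDerivAt (fun m : ℝ => 1 - m ^ 2) (-(2 * m)) m := by
    simpa using (hasDerivAt_pow 2 m).const_sub 1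
  have hsq0 : (1 : ℝ) - m ^ 2 ≠ 0 := (by nlinarith [hm.1, hm.2] : (0 : ℝ) < 1 - m ^ 2).ne'
  have hA := (artanh_pos hm).ne'
  have hm0 := hm.1.ne'
  refine (((hw.log (artanh_div_self_pos hm).ne').add hw).add
    ((hsq.log hsq0).div_const 2)).congr_deriv ?_
  field_simp
  ring

lemma monotoneOn_logHoleFactor : MonotoneOn logHoleFactor (Set.Ioo 0 1) := by
  refine monotoneOn_of_deriv_nonneg (convex_Ioo 0 1)
    (fun m hm => (hasDerivAt_logHoleFactor hm).continuousAt.continuousWithinAt)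
    (fun m hm => (hasDerivAt_logHoleFactor (interior_subset hm)).differentiableAt
      |>.differentiableWithinAt) fun m hm => ?_
  rw [interior_Ioo] at hm
  rw [(hasDerivAt_logHoleFactor hm).deriv, sub_nonneg]
  have hA := artanh_pos hm
  have hsq : 0 < 1 - m ^ 2 := by nlinarith [hm.1, hm.2]
  have hbound := artanh_mul_sqrt_one_sub_sq_le ⟨hm.1.le, hm.2⟩
  have hsq' : (artanh m * √(1 - m ^ 2)) ^ 2 ≤ m ^ 2 :=
    pow_le_pow_left₀ (by positivity) hbound 2
  rw [mul_pow, sq_sqrt hsq.le] at hsq'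
  rw [div_le_div_iff₀ (pow_pos hm.1 2) hA, inv_mul_eq_div, le_div_iff₀ hsq]
  nlinarith

lemma tendsto_logHoleFactor : Tendsto logHoleFactor (𝓝[>] 0) (𝓝 1) := by
  have hw : Tendsto (fun m => artanh m / m) (𝓝[>] 0) (𝓝 1) :=
    tendsto_artanh_div_self.mono_right nhdsWithin_le_nhds
  have hsq : Tendsto (fun m : ℝ => log (1 - m ^ 2) / 2) (𝓝[>] 0) (𝓝 0) :=
    ((by fun_prop (disch := norm_num) : ContinuousAt (fun m : ℝ => log (1 - m ^ 2) / 2) 0)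
      |>.tendsto.mono_left nhdsWithin_le_nhds).trans (by simp)
  unfold logHoleFactor
  simpa using ((continuousAt_log one_ne_zero).tendsto.comp hw |>.add hw).add hsq

lemma exp_one_le_holeFactor (hm : m ∈ Set.Ioo 0 1) : exp 1 ≤ holeFactor m := by
  rw [← exp_logHoleFactor hm, exp_le_exp]
  refine le_of_tendsto tendsto_logHoleFactor ?_
  filter_upwards [Ioo_mem_nhdsGT hm.1] with t ht
  exact monotoneOn_logHoleFactor ⟨ht.1, ht.2.trans hm.2⟩ hm ht.2.le

lemma tendsto_holeFactor_sub_div_sq :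
    Tendsto (fun m => (holeFactor m - exp 1) / m ^ 2) (𝓝[>] 0) (𝓝 (exp 1 / 6)) := by
  have hG : HasDerivAt (fun y => y * exp y) (2 * exp 1) 1 := by
    simpa [two_mul] using (hasDerivAt_id' 1).fun_mul (hasDerivAt_exp 1)
  have hslope := hG.tendsto_comp_sub_div
    (tendsto_artanh_div_self.mono_right (nhdsGT_le_nhdsNE 1))
    tendsto_artanh_div_self_sub_one_div_sq
  have hsqrt : Tendsto (fun m : ℝ => √(1 - m ^ 2)) (𝓝[>] 0) (𝓝 1) :=
    ((by fun_prop : Continuous fun m : ℝ => √(1 - m ^ 2)).tendsto' 0 1 (by simp)).mono_left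
      nhdsWithin_le_nhds
  have := (hslope.mul hsqrt).add (tendsto_sqrt_one_sub_sq_sub_one_div_sq.const_mul (exp 1))
  convert this using 2 with m
  · simp only [holeFactor, one_mul]; ring
  · ring

end HoleFactor

/-- The inverse temperature at which a stationary point of `Φ_{β,α}` has magnetization `m`,
for `κ = α(0) / α(1)`. -/
noncomputable def betaOfMag (κ m : ℝ) : ℝ := 2 * (artanh m / m) + κ * holeFactor m

lemma tendsto_betaOfMag_sub_div_sq (κ : ℝ) :
    Tendsto (fun m => (betaOfMag κ m - (2 + κ * exp 1)) / m ^ 2) (𝓝[>] 0)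
      (𝓝 (2 / 3 + κ * exp 1 / 6)) := by
  convert (tendsto_artanh_div_self_sub_one_div_sq.const_mul 2).add
    (tendsto_holeFactor_sub_div_sq.const_mul κ) using 2 with m
  · simp only [betaOfMag]; ring
  · ring

lemma add_mul_sq_le_betaOfMag {κ m : ℝ} (hκ : 0 ≤ κ) (hm : m ∈ Set.Ioo 0 1) :
    2 + κ * exp 1 + 2 / 3 * m ^ 2 ≤ betaOfMag κ m := by
  have hw : 1 + m ^ 2 / 3 ≤ artanh m / m := by
    rw [le_div_iff₀ hm.1]
    linarith [self_add_pow_three_div_three_le_artanh ⟨hm.1.le, hm.2⟩]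
  have := mul_le_mul_of_nonneg_left (exp_one_le_holeFactor hm) hκ
  rw [betaOfMag]
  linarith

lemma betaOfMag_eq_of_log_eq {A a0 β x m : ℝ} (hA : 0 < A) (ha0 : 0 < a0) (hx : x ∈ Set.Ioo 0 1)
    (hm : m ∈ Set.Ioo 0 1)
    (hplus : log (x / 2 * (1 + m) / A) + β * (x / 2 * (1 - m)) = log ((1 - x) / a0))
    (hminus : log (x / 2 * (1 - m) / A) + β * (x / 2 * (1 + m)) = log ((1 - x) / a0)) :
    betaOfMag (a0 / A) m = β := by
  obtain ⟨hx0, hx1⟩ := hx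
  have h1p : 0 < 1 + m := by linarith [hm.1]
  have h1m : 0 < 1 - m := by linarith [hm.2]
  have hup : 0 < x / 2 * (1 + m) / A := by positivity
  have hdown : 0 < x / 2 * (1 - m) / A := by positivity
  have hodds : 2 * artanh m = β * x * m := by
    have hlog : log (x / 2 * (1 + m) / A) - log (x / 2 * (1 - m) / A)
        = log ((1 + m) / (1 - m)) := by
      rw [← log_div hup.ne' hdown.ne']
      congr 1
      field_simp
    rw [artanh_eq_half_log ⟨by linarith, by linarith⟩]
    linear_combination hplus - hminus - hlog
  have hw : artanh m / m = β * x / 2 := by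
    field_simp [hm.1.ne']
    linear_combination hodds
  have hq : 0 < (1 - x) / a0 := div_pos (by linarith) ha0
  have hprod : x / 2 * (1 + m) / A * (x / 2 * (1 - m) / A) * exp (β * x)
      = (1 - x) / a0 * ((1 - x) / a0) := by
    have := congrArg exp (show log (x / 2 * (1 + m) / A) + log (x / 2 * (1 - m) / A) + β * x
      = log ((1 - x) / a0) + log ((1 - x) / a0) by linear_combination hplus + hminus)
    rwa [exp_add, exp_add, exp_add, exp_log hup, exp_log hdown, exp_log hq] at this
  have hhole : 1 - x = a0 / A * (x / 2) * exp (β * x / 2) * √(1 - m ^ 2) := by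
    rw [← pow_left_inj₀ (by linarith) (by positivity) two_ne_zero, mul_pow, mul_pow, mul_pow,
      sq_sqrt (by nlinarith), ← exp_nat_mul]
    push_cast
    field_simp at hprod ⊢
    linear_combination -hprod
  rw [betaOfMag, holeFactor, hw]
  linear_combination -β * hhole

lemma symAlpha_ne_zero {a0 : ℝ} (ha0 : a0 ∈ Set.Ioo 0 1) : ∀ s ∈ Spin, symAlpha a0 s ≠ 0 := by
  have : (1 - a0) / 2 ≠ 0 := by linarith [ha0.2]
  simp [Spin, symAlpha, ha0.1.ne', this]

theorem IsMaximizer.betaOfMag_eq {a0 β x m : ℝ} (ha0 : a0 ∈ Set.Ioo 0 1) (hx : 0 < x)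
    (hm : 0 < m) (hmax : IsMaximizer β (symAlpha a0) (coordMeasure x m)) :
    m < 1 ∧ betaOfMag (a0 / ((1 - a0) / 2)) m = β := by
  change IsMaximizer β (symAlpha a0) (spinVec (x / 2 * (1 - m)) (1 - x) (x / 2 * (1 + m))) at hmax
  have hr : 0 < x / 2 * (1 + m) := by positivity
  obtain ⟨hp, hq⟩ := hmax.pos_of_pos_one (symAlpha_ne_zero ha0) hr
  have hm1 : m < 1 := by nlinarith
  obtain ⟨hplus, hminus⟩ := hmax.log_div_add_mul_eq (symAlpha_ne_zero ha0) hp hq hr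
  simp only [symAlpha] at hplus hminus
  norm_num at hplus hminus
  exact ⟨hm1, betaOfMag_eq_of_log_eq (by linarith [ha0.2]) ha0.1 ⟨hx, by linarith⟩ ⟨hm, hm1⟩
    hplus hminus⟩

lemma tendsto_nhdsGT_zero_of_mul_sq_le {M : ℝ → ℝ} {b c : ℝ} (hc : 0 < c)
    (hM : ∀ β, b < β → 0 < M β ∧ c * M β ^ 2 ≤ β - b) : Tendsto M (𝓝[>] b) (𝓝[>] 0) := by
  have hbound : Tendsto (fun β => √((β - b) / c)) (𝓝[>] b) (𝓝 0) :=
    ((by fun_prop : Continuous fun β => √((β - b) / c)).tendsto' b 0 (by simp)).mono_left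
      nhdsWithin_le_nhds
  refine tendsto_nhdsWithin_iff.2 ⟨tendsto_of_tendsto_of_tendsto_of_le_of_le' tendsto_const_nhds
    hbound ?_ ?_, ?_⟩ <;> filter_upwards [self_mem_nhdsWithin] with β (hβ : b < β)
  · exact (hM β hβ).1.le
  · exact le_sqrt_of_sq_le ((le_div_iff₀ hc).2 (by linarith [(hM β hβ).2]))
  · exact (hM β hβ).1

lemma tendsto_div_sqrt_sub_of_tendsto_sub_div_sq {B M : ℝ → ℝ} {b l : ℝ} (hl : 0 < l)
    (hB : Tendsto (fun m => (B m - b) / m ^ 2) (𝓝[>] 0) (𝓝 l))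
    (hM : Tendsto M (𝓝[>] b) (𝓝[>] 0)) (hBM : ∀ β, b < β → B (M β) = β) :
    Tendsto (fun β => M β / √(β - b)) (𝓝[>] b) (𝓝 (√l)⁻¹) := by
  refine ((hB.comp hM).sqrt.inv₀ (sqrt_pos.2 hl).ne').congr' ?_
  filter_upwards [self_mem_nhdsWithin, hM self_mem_nhdsWithin] with β (hβ : b < β)
    (hMβ : 0 < M β)
  simp [hBM β hβ, sqrt_div' _ (sq_nonneg (M β)), sqrt_sq hMβ.le]

/-- Mean-field critical exponent `1/2` for the magnetization of the mean-field
soft-core Widom-Rowlinson model in the inverse-temperature direction: if `M β`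
denotes, for `β > β_c`, the magnetization coordinate of the global maximizer of
`Φ_{β,α}` with `ν(1) > ν(-1)`, then `M β / (β - β_c)^{1/2} → c > 0` as `β ↓ β_c`. -/
theorem critical_exponent_inverse_temperature (a0 : ℝ) (ha0 : a0 ∈ Set.Ioo (0 : ℝ) 1)
    (M : ℝ → ℝ)
    (hM : ∀ β : ℝ, 2 + Real.exp 1 * a0 / ((1 - a0) / 2) < β →
      0 < M β ∧ M β ≤ 1 ∧
        ∃ x : ℝ, 0 < x ∧ IsMaximizer β (symAlpha a0) (coordMeasure x (M β))) :
    ∃ c : ℝ, 0 < c ∧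
      Tendsto (fun β : ℝ => M β / Real.sqrt (β - (2 + Real.exp 1 * a0 / ((1 - a0) / 2))))
        (𝓝[>] (2 + Real.exp 1 * a0 / ((1 - a0) / 2))) (𝓝 c) := by
  set κ := a0 / ((1 - a0) / 2) with hκ
  have hκ0 : 0 < κ := div_pos ha0.1 (by linarith [ha0.2])
  have hβc : 2 + exp 1 * a0 / ((1 - a0) / 2) = 2 + κ * exp 1 := by rw [hκ]; ring
  have hcurve : ∀ β, 2 + κ * exp 1 < β → M β ∈ Set.Ioo 0 1 ∧ betaOfMag κ (M β) = β := by
    intro β hβ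
    obtain ⟨hM0, -, x, hx, hmax⟩ := hM β (hβc ▸ hβ)
    obtain ⟨hM1, hB⟩ := hmax.betaOfMag_eq ha0 hx hM0
    exact ⟨⟨hM0, hM1⟩, hB⟩
  have hM0 : Tendsto M (𝓝[>] (2 + κ * exp 1)) (𝓝[>] 0) :=
    tendsto_nhdsGT_zero_of_mul_sq_le (c := 2 / 3) (by norm_num) fun β hβ =>
      ⟨(hcurve β hβ).1.1, by linarith [add_mul_sq_le_betaOfMag hκ0.le (hcurve β hβ).1,
        (hcurve β hβ).2]⟩
  rw [hβc]
  exact ⟨_, by positivity, tendsto_div_sqrt_sub_of_tendsto_sub_div_sq (by positivity)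
    (tendsto_betaOfMag_sub_div_sq κ) hM0 fun β hβ => (hcurve β hβ).2⟩
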